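/- arXiv:1807.08611 — 4 statements merged into one kernel-verified Lean document; each statement's English description precedes it below -/
import Mathlib

section
/- Let H be a real Hilbert space and P : H → H a positively homogeneous continuous operator such that uₙ ⇀ u implies P(uₙ) → P(u). Suppose there exists u₀ ∈ H, u₀ ≠ 0, with λ₀ := max_{u ≠ 0} (P(u), u)/‖u‖² = (P(u₀), u₀)/‖u₀‖² > 0, and suppose lim_{t→0} (1/t)(P(u₀+th) − P(u₀), u₀) = (P(u₀), h) for all h ∈ H. Then P(u₀) = λ₀ u₀, i.e. λ₀ is an eigenvalue of P with eigenvector u₀. -/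
open Filter Topology
open scoped RealInnerProductSpace

/-- If the Rayleigh-type quotient of a positively homogeneous, continuous,
weak-to-strong continuous operator `P` attains its positive maximum `λ₀` at `u₀ ≠ 0`,
and the directional limit condition holds at `u₀`, then `P u₀ = λ₀ • u₀`. -/
theorem stmt_5 {H : Type*} [NormedAddCommGroup H] [InnerProductSpace ℝ H] [CompleteSpace H]
    (P : H → H)
    (hhom : ∀ (t : ℝ), 0 < t → ∀ u : H, P (t • u) = t • P u)
    (hcont : Continuous P)
    (hws : ∀ (w : ℕ → H) (l : H),
      (∀ v : H, Tendsto (fun n => ⟪w n, v⟫) atTop (𝓝 ⟪l, v⟫)) →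
      Tendsto (fun n => P (w n)) atTop (𝓝 (P l)))
    (u₀ : H) (hu₀ : u₀ ≠ 0) (lam₀ : ℝ)
    (hval : lam₀ = ⟪P u₀, u₀⟫ / ‖u₀‖ ^ 2)
    (hpos : 0 < lam₀)
    (hmax : ∀ u : H, u ≠ 0 → ⟪P u, u⟫ / ‖u‖ ^ 2 ≤ lam₀)
    (hlim : ∀ h : H,
      Tendsto (fun t : ℝ => t⁻¹ * (⟪P (u₀ + t • h), u₀⟫ - ⟪P u₀, u₀⟫)) (𝓝[≠] 0)
        (𝓝 ⟪P u₀, h⟫)) :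
    P u₀ = lam₀ • u₀ := by
  have hnz : ‖u₀‖ ≠ 0 := norm_ne_zero_iff.mpr hu₀
  have hn0 : (0:ℝ) < ‖u₀‖ ^ 2 := by positivity
  have hip : ⟪P u₀, u₀⟫ = lam₀ * ‖u₀‖ ^ 2 := by
    rw [hval]; field_simp
  -- main key: for every h, ⟪P u₀ - lam₀ • u₀, h⟫ = 0
  have key : ∀ h : H, ⟪P u₀ - lam₀ • u₀, h⟫ = 0 := by
    intro h
    -- the quotient function g(t)/t
    set g : ℝ → ℝ := fun t => (⟪P (u₀ + t • h), u₀ + t • h⟫ - lam₀ * ‖u₀ + t • h‖ ^ 2) / t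
      with hg
    have hL :
        Tendsto g (𝓝[≠] (0:ℝ))
          (𝓝 (⟪P u₀, h⟫ + ⟪P u₀, h⟫ + -(lam₀ * (2 * ⟪u₀, h⟫ + 0 * ‖h‖ ^ 2)))) := by
      have h2 : Tendsto (fun t : ℝ => ⟪P (u₀ + t • h), h⟫) (𝓝[≠] (0:ℝ)) (𝓝 ⟪P u₀, h⟫) := by
        have : Continuous fun t : ℝ => ⟪P (u₀ + t • h), h⟫ :=
          (hcont.comp (continuous_const.add (continuous_id.smul continuous_const))).inner
            continuous_const
        have := this.tendsto 0
        simpa using this.mono_left nhdsWithin_le_nhds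
      have h3 : Tendsto (fun t : ℝ => -(lam₀ * (2 * ⟪u₀, h⟫ + t * ‖h‖ ^ 2))) (𝓝[≠] (0:ℝ))
          (𝓝 (-(lam₀ * (2 * ⟪u₀, h⟫ + 0 * ‖h‖ ^ 2)))) := by
        have : Continuous fun t : ℝ => -(lam₀ * (2 * ⟪u₀, h⟫ + t * ‖h‖ ^ 2)) := by fun_prop
        exact (this.tendsto 0).mono_left nhdsWithin_le_nhds
      have hsum := ((hlim h).add h2).add h3
      refine hsum.congr' ?_
      filter_upwards [self_mem_nhdsWithin] with t ht
      have ht' : t ≠ 0 := ht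
      rw [hg]
      have e1 : ⟪P (u₀ + t • h), u₀ + t • h⟫
          = ⟪P (u₀ + t • h), u₀⟫ + t * ⟪P (u₀ + t • h), h⟫ := by
        rw [inner_add_right, real_inner_smul_right]
      have e2 : ‖u₀ + t • h‖ ^ 2 = ‖u₀‖ ^ 2 + 2 * (t * ⟪u₀, h⟫) + t ^ 2 * ‖h‖ ^ 2 := by
        rw [@norm_add_sq_real, real_inner_smul_right, norm_smul]
        simp [mul_pow]
      simp only [e1, e2, hip]
      field_simp
      ring
    -- nonvanishing of u₀ + t • h near 0, and the sign of g
    have hne : ∀ᶠ t : ℝ in 𝓝 0, u₀ + t • h ≠ 0 := by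
      have hc : Continuous fun t : ℝ => u₀ + t • h := by fun_prop
      have : ∀ᶠ t : ℝ in 𝓝 0, u₀ + t • h ∈ {x : H | x ≠ 0} := by
        refine (hc.tendsto 0).eventually ?_
        have : u₀ + (0:ℝ) • h = u₀ := by simp
        rw [this]
        exact isOpen_compl_singleton.eventually_mem hu₀
      exact this
    have hnum : ∀ t : ℝ, u₀ + t • h ≠ 0 →
        ⟪P (u₀ + t • h), u₀ + t • h⟫ - lam₀ * ‖u₀ + t • h‖ ^ 2 ≤ 0 := by
      intro t htne
      have hnz' : ‖u₀ + t • h‖ ≠ 0 := norm_ne_zero_iff.mpr htne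
      have hpos' : (0:ℝ) < ‖u₀ + t • h‖ ^ 2 := by positivity
      have := hmax (u₀ + t • h) htne
      rw [div_le_iff₀ hpos'] at this
      linarith
    set L := ⟪P u₀, h⟫ + ⟪P u₀, h⟫ + -(lam₀ * (2 * ⟪u₀, h⟫ + 0 * ‖h‖ ^ 2)) with hLdef
    have hLle : L ≤ 0 := by
      have hT : Tendsto g (𝓝[>] (0:ℝ)) (𝓝 L) :=
        hL.mono_left (nhdsWithin_mono _ (fun t ht => ne_of_gt ht))
      refine le_of_tendsto hT ?_
      filter_upwards [self_mem_nhdsWithin,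
        nhdsWithin_le_nhds hne] with t ht htne
      have : ⟪P (u₀ + t • h), u₀ + t • h⟫ - lam₀ * ‖u₀ + t • h‖ ^ 2 ≤ 0 := hnum t htne
      exact div_nonpos_of_nonpos_of_nonneg this (le_of_lt ht)
    have hLge : 0 ≤ L := by
      have hT : Tendsto g (𝓝[<] (0:ℝ)) (𝓝 L) :=
        hL.mono_left (nhdsWithin_mono _ (fun t ht => ne_of_lt ht))
      refine ge_of_tendsto hT ?_
      filter_upwards [self_mem_nhdsWithin,
        nhdsWithin_le_nhds hne] with t ht htne
      have : ⟪P (u₀ + t • h), u₀ + t • h⟫ - lam₀ * ‖u₀ + t • h‖ ^ 2 ≤ 0 := hnum t htne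
      exact div_nonneg_iff.mpr (Or.inr ⟨this, le_of_lt ht⟩)
    have hL0 : L = 0 := le_antisymm hLle hLge
    rw [hLdef] at hL0
    rw [inner_sub_left, real_inner_smul_left]
    linarith
  have := key (P u₀ - lam₀ • u₀)
  rw [inner_self_eq_zero] at this
  exact sub_eq_zero.mp this
end

section
/- Let H be a real Hilbert space, P : H → H positively homogeneous and continuous with uₙ ⇀ u ⟹ P(uₙ) → P(u), and L : H → H linear, bounded, symmetric, compact with maximal eigenvalue in (0,1]. Suppose there exists u₀ ∉ Ker(I−L) such that λ₀ := max_{u ∉ Ker(I−L)} (P(u), u)/((I−L)u, u) = (P(u₀), u₀)/((I−L)u₀, u₀) > 0 and lim_{t→0}(1/t)(P(u₀+th) − P(u₀), u₀) = (P(u₀), h) for all h ∈ H. Then λ₀(I−L)u₀ = P(u₀), and λ₀ is the maximal eigenvalue of the problem λ(I−L)u = P(u) among eigenvectors not in Ker(I−L). -/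
open Filter Topology
open scoped RealInnerProductSpace

lemma aux_pos {H : Type*} [NormedAddCommGroup H] [InnerProductSpace ℝ H]
    (L : H →L[ℝ] H) (hsym : ∀ u v : H, ⟪L u, v⟫ = ⟪u, L v⟫)
    (μ : ℝ) (hμ1 : μ ≤ 1) (hray : ∀ u : H, ⟪L u, u⟫ ≤ μ * ‖u‖ ^ 2)
    (u : H) (hu : L u ≠ u) : 0 < ⟪u - L u, u⟫ := by
  have hnn : ∀ v : H, 0 ≤ ⟪v - L v, v⟫ := by
    intro v
    have h1 := hray v
    have h2 : ⟪v, v⟫ = ‖v‖ ^ 2 := real_inner_self_eq_norm_sq v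
    rw [inner_sub_left]
    nlinarith [sq_nonneg ‖v‖]
  rcases lt_or_ge 0 ⟪u - L u, u⟫ with h | h
  · exact h
  exfalso
  have h0 : ⟪u - L u, u⟫ = 0 := le_antisymm h (hnn u)
  set w := u - L u with hw
  have hwne : w ≠ 0 := sub_ne_zero.mpr (Ne.symm hu)
  set a : ℝ := ⟪w, w⟫ with ha
  have hapos : 0 < a := by
    rw [ha, real_inner_self_eq_norm_sq]
    exact pow_pos (norm_pos_iff.mpr hwne) 2
  set b : ℝ := ⟪w - L w, w⟫ with hb
  have hbnn : 0 ≤ b := hnn w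
  have hTw : ⟪w - L w, u⟫ = a := by
    rw [inner_sub_left, hsym w u, ← inner_sub_right, ← hw]
  have key : ∀ t : ℝ, 0 ≤ -2 * t * a + t ^ 2 * b := by
    intro t
    have h1 := hnn (u - t • w)
    have hL : L (u - t • w) = L u - t • L w := by simp [map_sub, map_smul]
    have hexp : (u - t • w) - L (u - t • w) = w - t • (w - L w) := by
      rw [hL, hw]
      module
    rw [hexp, inner_sub_left, inner_sub_right, inner_sub_right,
      real_inner_smul_left, real_inner_smul_left, real_inner_smul_right,
      real_inner_smul_right, h0, hTw, ← ha] at h1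
    nlinarith [h1]
  rcases eq_or_lt_of_le hbnn with hb0 | hbpos
  · have := key 1; nlinarith
  · have h1 := key (a / b)
    have hb' : b ≠ 0 := ne_of_gt hbpos
    have h2 : -2 * (a / b) * a + (a / b) ^ 2 * b = -(a ^ 2 / b) := by
      field_simp; ring
    have h3 : 0 < a ^ 2 / b := div_pos (pow_pos hapos 2) hbpos
    linarith [h1, h2 ▸ h1]

/-- Variational characterization of the maximal eigenvalue of `λ(I−L)u = P(u)`:
if the generalized Rayleigh quotient `(P u, u)/((I−L)u, u)` attains its positive
maximum `λ₀` at `u₀ ∉ Ker(I−L)` and the directional limit condition holds, then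
`λ₀ (I−L) u₀ = P u₀` and `λ₀` is the maximal eigenvalue among eigenvectors
outside `Ker(I−L)`. -/
theorem stmt_8 {H : Type*} [NormedAddCommGroup H] [InnerProductSpace ℝ H] [CompleteSpace H]
    (P : H → H)
    (hhom : ∀ (t : ℝ), 0 < t → ∀ u : H, P (t • u) = t • P u)
    (hcont : Continuous P)
    (hws : ∀ (w : ℕ → H) (l : H),
      (∀ v : H, Tendsto (fun n => ⟪w n, v⟫) atTop (𝓝 ⟪l, v⟫)) →
      Tendsto (fun n => P (w n)) atTop (𝓝 (P l)))
    (L : H →L[ℝ] H)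
    (hsym : ∀ u v : H, ⟪L u, v⟫ = ⟪u, L v⟫)
    (hcpt : IsCompactOperator L)
    (μ : ℝ) (hμ : μ ∈ Set.Ioc (0 : ℝ) 1)
    (heigL : ∃ e : H, e ≠ 0 ∧ L e = μ • e)
    (hray : ∀ u : H, ⟪L u, u⟫ ≤ μ * ‖u‖ ^ 2)
    (u₀ : H) (hu₀ : L u₀ ≠ u₀) (lam₀ : ℝ)
    (hval : lam₀ = ⟪P u₀, u₀⟫ / ⟪u₀ - L u₀, u₀⟫)
    (hpos : 0 < lam₀)
    (hmax : ∀ u : H, L u ≠ u → ⟪P u, u⟫ / ⟪u - L u, u⟫ ≤ lam₀)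
    (hlim : ∀ h : H,
      Tendsto (fun t : ℝ => t⁻¹ * (⟪P (u₀ + t • h), u₀⟫ - ⟪P u₀, u₀⟫)) (𝓝[≠] 0)
        (𝓝 ⟪P u₀, h⟫)) :
    lam₀ • (u₀ - L u₀) = P u₀ ∧
      ∀ (lam : ℝ) (u : H), u ≠ 0 → L u ≠ u → lam • (u - L u) = P u → lam ≤ lam₀ := by
  have hq0 : 0 < ⟪u₀ - L u₀, u₀⟫ := aux_pos L hsym μ hμ.2 hray u₀ hu₀
  set q0 : ℝ := ⟪u₀ - L u₀, u₀⟫ with hq0def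
  have hq0ne : q0 ≠ 0 := ne_of_gt hq0
  have hfq : ⟪P u₀, u₀⟫ = lam₀ * q0 := by
    rw [hval]; field_simp
  have key : ∀ h : H, ⟪P u₀, h⟫ = lam₀ * ⟪u₀ - L u₀, h⟫ := by
    intro h
    set B : ℝ := ⟪u₀ - L u₀, h⟫ with hBdef
    set C : ℝ := ⟪h - L h, h⟫ with hCdef
    have hBsym : ⟪h - L h, u₀⟫ = B := by
      rw [inner_sub_left, hsym h u₀, ← inner_sub_right, hBdef, real_inner_comm]
    have hq : ∀ t : ℝ, ⟪(u₀ + t • h) - L (u₀ + t • h), u₀ + t • h⟫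
        = q0 + 2 * t * B + t ^ 2 * C := by
      intro t
      have hL : L (u₀ + t • h) = L u₀ + t • L h := by simp [map_add, map_smul]
      have hexp : (u₀ + t • h) - L (u₀ + t • h) = (u₀ - L u₀) + t • (h - L h) := by
        rw [hL]; module
      rw [hexp, inner_add_left, inner_add_right, inner_add_right,
        real_inner_smul_right, real_inner_smul_right, real_inner_smul_left,
        real_inner_smul_left, hBsym, ← hq0def, ← hBdef, ← hCdef]
      ring
    have hf : ∀ t : ℝ, ⟪P (u₀ + t • h), u₀ + t • h⟫
        = ⟪P (u₀ + t • h), u₀⟫ + t * ⟪P (u₀ + t • h), h⟫ := by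
      intro t; rw [inner_add_right, real_inner_smul_right]
    set Φ : ℝ → ℝ := fun t => ⟪P (u₀ + t • h), u₀ + t • h⟫
      - lam₀ * ⟪(u₀ + t • h) - L (u₀ + t • h), u₀ + t • h⟫ with hΦ
    -- the difference quotient of Φ at 0 tends to 2 * (⟪P u₀, h⟫ - lam₀ * B)
    have htend : Tendsto (fun t : ℝ => t⁻¹ * Φ t) (𝓝[≠] 0)
        (𝓝 (2 * (⟪P u₀, h⟫ - lam₀ * B))) := by
      have h1 := hlim h
      have h2 : Tendsto (fun t : ℝ => ⟪P (u₀ + t • h), h⟫) (𝓝[≠] 0) (𝓝 ⟪P u₀, h⟫) := by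
        have hc : Continuous fun t : ℝ => ⟪P (u₀ + t • h), h⟫ :=
          (hcont.comp (continuous_const.add (continuous_id.smul continuous_const))).inner continuous_const
        have h3 := hc.tendsto 0
        simp only [zero_smul, add_zero] at h3
        exact h3.mono_left nhdsWithin_le_nhds
      have h3 : Tendsto (fun t : ℝ => lam₀ * (2 * B + t * C)) (𝓝[≠] 0)
          (𝓝 (lam₀ * (2 * B + 0 * C))) := by
        apply Tendsto.mono_left _ nhdsWithin_le_nhds
        exact ((continuous_const.mul (continuous_const.add
          (continuous_id.mul continuous_const))).tendsto 0)
      have h4 := (h1.add h2).sub h3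
      have heq : ∀ᵉ (t ∈ ({0}ᶜ : Set ℝ)),
          (t⁻¹ * (⟪P (u₀ + t • h), u₀⟫ - ⟪P u₀, u₀⟫) + ⟪P (u₀ + t • h), h⟫)
            - lam₀ * (2 * B + t * C) = t⁻¹ * Φ t := by
        intro t ht
        have htne : t ≠ 0 := ht
        rw [hΦ]
        simp only []
        rw [hf t, hq t, hfq]
        field_simp
        ring
      have h5 := h4.congr' (eventually_nhdsWithin_of_forall heq)
      convert h5 using 2
      ring
    -- Φ is eventually nonpositive near 0
    have hΦle : ∀ᶠ t in 𝓝 (0 : ℝ), Φ t ≤ 0 := by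
      have hcq : Continuous fun t : ℝ => q0 + 2 * t * B + t ^ 2 * C := by fun_prop
      have h6 : Tendsto (fun t : ℝ => q0 + 2 * t * B + t ^ 2 * C) (𝓝 0)
          (𝓝 q0) := by
        have := hcq.tendsto 0
        simpa using this
      have h7 : ∀ᶠ t in 𝓝 (0 : ℝ), 0 < q0 + 2 * t * B + t ^ 2 * C :=
        h6.eventually (eventually_gt_nhds hq0)
      filter_upwards [h7] with t ht
      have hqt : 0 < ⟪(u₀ + t • h) - L (u₀ + t • h), u₀ + t • h⟫ := by
        rw [hq t]; exact ht
      have hLne : L (u₀ + t • h) ≠ u₀ + t • h := by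
        intro he
        rw [he] at hqt
        simp at hqt
      have h8 := hmax _ hLne
      rw [div_le_iff₀ hqt] at h8
      rw [hΦ]
      simp only []
      linarith
    -- sign argument
    have hle : 2 * (⟪P u₀, h⟫ - lam₀ * B) ≤ 0 := by
      have hsub : (Set.Ioi (0:ℝ)) ⊆ {(0:ℝ)}ᶜ := fun x hx => ne_of_gt hx
      have htm := htend.mono_left (nhdsWithin_mono 0 hsub)
      refine le_of_tendsto htm ?_
      filter_upwards [hΦle.filter_mono nhdsWithin_le_nhds, self_mem_nhdsWithin]
        with t ht1 ht2
      exact mul_nonpos_of_nonneg_of_nonpos (inv_nonneg.mpr (le_of_lt ht2)) ht1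
    have hge : 0 ≤ 2 * (⟪P u₀, h⟫ - lam₀ * B) := by
      have hsub : (Set.Iio (0:ℝ)) ⊆ {(0:ℝ)}ᶜ := fun x hx => ne_of_lt hx
      have htm := htend.mono_left (nhdsWithin_mono 0 hsub)
      refine ge_of_tendsto htm ?_
      filter_upwards [hΦle.filter_mono nhdsWithin_le_nhds, self_mem_nhdsWithin]
        with t ht1 ht2
      exact mul_nonneg_of_nonpos_of_nonpos (le_of_lt (inv_neg''.mpr ht2)) ht1
    linarith
  constructor
  · refine ext_inner_right ℝ ?_
    intro v
    rw [real_inner_smul_left]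
    exact (key v).symm
  · intro lam u hu0 hLu heq
    have hqu : 0 < ⟪u - L u, u⟫ := aux_pos L hsym μ hμ.2 hray u hLu
    have h1 : ⟪P u, u⟫ = lam * ⟪u - L u, u⟫ := by
      rw [← heq, real_inner_smul_left]
    have h2 := hmax u hLu
    rw [h1, mul_div_assoc, div_self (ne_of_gt hqu), mul_one] at h2
    exact h2
end

section
/- Let H be a real Hilbert space, S : H → H linear bounded symmetric compact, and β : H → H positively homogeneous with (β(u), u) ≥ 0 for all u, and weak-to-strong sequentially continuous. Suppose there exists φ ∈ H with (Sφ, φ) − (β(φ), φ) > 0. Then the maximum M := max_{‖u‖ = 1} [(Su, u) − (β(u), u)] exists, is positive, and equals sup_{u ≠ 0} [(Su, u) − (β(u), u)]/‖u‖². -/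
open Filter Topology
open scoped RealInnerProductSpace

/-!
Write `F u = ⟪S u, u⟫ - ⟪β u, u⟫`. Along a bounded weakly convergent sequence both `S u` (by
compactness of `S`) and `β u` (by hypothesis) converge in norm, so `F` is continuous along such
sequences. The closed unit ball is weakly sequentially compact (a diagonal extraction on the
countably many test vectors `u k`, then the Riesz representation of the limit functional), so
`F` is bounded above on it and attains its supremum. Since `F (t • u) = t ^ 2 * F u` for `t > 0`,
`F u / ‖u‖ ^ 2 = F (‖u‖⁻¹ • u)` is bounded by that maximum, and a positive maximum cannot be
attained strictly inside the ball.
-/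

section WeakConvergence

variable {H E : Type*} [NormedAddCommGroup H] [InnerProductSpace ℝ H]
  [NormedAddCommGroup E] [InnerProductSpace ℝ E]

/-- Weak convergence tested against the functionals `⟪·, v⟫`; in a Hilbert space these are all
continuous functionals. -/
def WeakTendsto (u : ℕ → H) (l : H) : Prop :=
  ∀ v : H, Tendsto (fun n => ⟪u n, v⟫) atTop (𝓝 ⟪l, v⟫)

theorem Filter.Tendsto.weakTendsto {u : ℕ → H} {l : H} (h : Tendsto u atTop (𝓝 l)) :
    WeakTendsto u l :=
  fun _ => h.inner tendsto_const_nhds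

namespace WeakTendsto

variable {u : ℕ → H} {l : H}

theorem comp_tendsto (h : WeakTendsto u l) {φ : ℕ → ℕ} (hφ : Tendsto φ atTop atTop) :
    WeakTendsto (u ∘ φ) l :=
  fun v => (h v).comp hφ

theorem unique {l' : H} (h : WeakTendsto u l) (h' : WeakTendsto u l') : l = l' :=
  ext_inner_right ℝ fun v => tendsto_nhds_unique (h v) (h' v)

theorem norm_le {C : ℝ} (hu : ∀ n, ‖u n‖ ≤ C) (h : WeakTendsto u l) : ‖l‖ ≤ C := by
  have hC : 0 ≤ C := (norm_nonneg _).trans (hu 0)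
  have hl : ‖l‖ * ‖l‖ ≤ C * ‖l‖ := by
    rw [← real_inner_self_eq_norm_mul_norm]
    exact le_of_tendsto' (h l) fun n =>
      (real_inner_le_norm _ _).trans (mul_le_mul_of_nonneg_right (hu n) (norm_nonneg _))
  rcases (norm_nonneg l).eq_or_lt with h0 | hpos
  · rw [← h0]
    exact hC
  · exact le_of_mul_le_mul_right hl hpos

theorem tendsto_inner_of_tendsto {C : ℝ} (h : WeakTendsto u l) (hu : ∀ n, ‖u n‖ ≤ C)
    {a : ℕ → H} {A : H} (ha : Tendsto a atTop (𝓝 A)) :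
    Tendsto (fun n => ⟪a n, u n⟫) atTop (𝓝 ⟪A, l⟫) := by
  have hsmall : Tendsto (fun n => ⟪a n - A, u n⟫) atTop (𝓝 0) :=
    squeeze_zero_norm (fun n => (norm_inner_le_norm _ _).trans
      (mul_le_mul_of_nonneg_left (hu n) (norm_nonneg _)))
      (by simpa using (tendsto_iff_norm_sub_tendsto_zero.1 ha).mul_const C)
  have hfixed : Tendsto (fun n => ⟪A, u n⟫) atTop (𝓝 ⟪A, l⟫) := by
    simpa only [real_inner_comm A] using h A
  simpa [inner_sub_left] using hsmall.add hfixed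

theorem map [CompleteSpace H] [CompleteSpace E] (h : WeakTendsto u l) (T : H →L[ℝ] E) :
    WeakTendsto (fun n => T (u n)) (T l) :=
  fun v => by simpa only [← ContinuousLinearMap.adjoint_inner_right] using h (T.adjoint v)

end WeakTendsto

theorem IsCompactOperator.tendsto_of_weakTendsto [CompleteSpace H] [CompleteSpace E]
    {T : H →L[ℝ] E} (hT : IsCompactOperator T) {u : ℕ → H} {l : H} {C : ℝ}
    (hu : ∀ n, ‖u n‖ ≤ C) (h : WeakTendsto u l) :
    Tendsto (fun n => T (u n)) atTop (𝓝 (T l)) := by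
  obtain ⟨K, hK, hTK⟩ := hT.image_closedBall_subset_compact C
  refine tendsto_of_subseq_tendsto fun ns hns => ?_
  obtain ⟨y, -, ms, hms, hy⟩ := hK.tendsto_subseq fun n =>
    hTK ⟨u (ns n), mem_closedBall_zero_iff.2 (hu _), rfl⟩
  have hlim : y = T l :=
    hy.weakTendsto.unique ((h.map T).comp_tendsto (hns.comp hms.tendsto_atTop))
  exact ⟨ms, hlim ▸ hy⟩

end WeakConvergence

section WeakCompactness

variable {H : Type*} [NormedAddCommGroup H] [InnerProductSpace ℝ H]

/-- `⟪w n, v⟫` is Cauchy iff the equicontinuous family `v ↦ ⟪w m - w n, v⟫` tends to `0` along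
pairs `(m, n)`, and such convergence sets are closed. -/
theorem isClosed_setOf_cauchySeq_inner {w : ℕ → H} {C : ℝ} (hw : ∀ n, ‖w n‖ ≤ C) :
    IsClosed {v : H | CauchySeq fun n => ⟪w n, v⟫} := by
  let G : ℕ × ℕ → H →L[ℝ] ℝ := fun p => innerSL ℝ (w p.1 - w p.2)
  have hG : Equicontinuous ((↑) ∘ G) := by
    refine (show (∃ C, ∀ p, ‖G p‖ ≤ C) → _ from ((NormedSpace.equicontinuous_TFAE G).out 5 1).1)
      ⟨C + C, fun p => ?_⟩
    exact (innerSL_apply_norm ℝ _).trans_le ((norm_sub_le _ _).trans (add_le_add (hw _) (hw _)))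
  convert hG.isClosed_setOfPred_tendsto (l := atTop) (f := fun _ => (0 : ℝ)) continuous_const
  simp only [cauchySeq_iff_tendsto_dist_atTop_0, dist_eq_norm,
    ← tendsto_zero_iff_norm_tendsto_zero, Function.comp_apply, G, coe_innerSL_apply, inner_sub_left]

def cauchyInnerSubmodule (w : ℕ → H) : Submodule ℝ H where
  carrier := {v | CauchySeq fun n => ⟪w n, v⟫}
  zero_mem' := by simpa using cauchySeq_const (0 : ℝ)
  add_mem' hu hv := by
    simp only [Set.mem_ofPred_eq, inner_add_right]
    exact hu.add hv
  smul_mem' c _ hv := by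
    simp only [Set.mem_ofPred_eq, real_inner_smul_right]
    exact (uniformContinuous_const_smul c).comp_cauchySeq hv

/-- A diagonal extraction, obtained from sequential compactness of a countable product of
intervals. -/
theorem exists_subseq_cauchySeq_inner {u : ℕ → H} {C : ℝ} (hu : ∀ n, ‖u n‖ ≤ C) :
    ∃ φ : ℕ → ℕ, StrictMono φ ∧ ∀ k, CauchySeq fun n => ⟪u (φ n), u k⟫ := by
  have hmem : ∀ n, (fun k => ⟪u n, u k⟫) ∈
      Set.univ.pi fun k => Metric.closedBall (0 : ℝ) (C * ‖u k‖) :=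
    fun n k _ => mem_closedBall_zero_iff.2 <|
      (norm_inner_le_norm _ _).trans (mul_le_mul_of_nonneg_right (hu n) (norm_nonneg _))
  obtain ⟨a, -, φ, hφ, hlim⟩ :=
    (isCompact_univ_pi fun k => isCompact_closedBall (0 : ℝ) (C * ‖u k‖)).tendsto_subseq hmem
  exact ⟨φ, hφ, fun k => ((continuous_apply k).tendsto a |>.comp hlim).cauchySeq⟩

variable [CompleteSpace H]

theorem cauchySeq_inner_of_cauchySeq_inner_range {u w : ℕ → H} {C : ℝ} (hw : ∀ n, ‖w n‖ ≤ C)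
    (hwu : ∀ n, w n ∈ (Submodule.span ℝ (Set.range u)).topologicalClosure)
    (hcauchy : ∀ k, CauchySeq fun n => ⟪w n, u k⟫) (v : H) :
    CauchySeq fun n => ⟪w n, v⟫ := by
  set K := (Submodule.span ℝ (Set.range u)).topologicalClosure
  have hK : K ≤ cauchyInnerSubmodule w :=
    Submodule.topologicalClosure_minimal _ (Submodule.span_le.2 (Set.range_subset_iff.2 hcauchy))
      (isClosed_setOf_cauchySeq_inner hw)
  have hKperp : Kᗮ ≤ cauchyInnerSubmodule w := fun v hv => by
    simpa [cauchyInnerSubmodule, Submodule.inner_right_of_mem_orthogonal (hwu _) hv] using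
      cauchySeq_const (0 : ℝ)
  have hsup : K ⊔ Kᗮ = ⊤ := Submodule.sup_orthogonal_of_hasOrthogonalProjection
  exact sup_le hK hKperp (hsup ▸ Submodule.mem_top)

theorem exists_weakTendsto_of_cauchySeq_inner {w : ℕ → H} {C : ℝ} (hw : ∀ n, ‖w n‖ ≤ C)
    (hcauchy : ∀ v, CauchySeq fun n => ⟪w n, v⟫) : ∃ l, WeakTendsto w l := by
  choose f hf using fun v => cauchySeq_tendsto_of_complete (hcauchy v)
  let g : H →L[ℝ] ℝ := .ofTendstoOfBoundedRange f (fun n => innerSL ℝ (w n))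
    (tendsto_pi_nhds.2 hf) (isBounded_iff_forall_norm_le.2 ⟨C, by
      rintro _ ⟨n, rfl⟩
      exact (innerSL_apply_norm ℝ _).trans_le (hw n)⟩)
  refine ⟨(InnerProductSpace.toDual ℝ H).symm g, fun v => ?_⟩
  rw [InnerProductSpace.toDual_symm_apply]
  exact hf v

theorem exists_weakTendsto_subseq {u : ℕ → H} {C : ℝ} (hu : ∀ n, ‖u n‖ ≤ C) :
    ∃ l, ∃ φ : ℕ → ℕ, StrictMono φ ∧ WeakTendsto (u ∘ φ) l := by
  obtain ⟨φ, hφ, hcauchy⟩ := exists_subseq_cauchySeq_inner hu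
  have hwu : ∀ n, u (φ n) ∈ (Submodule.span ℝ (Set.range u)).topologicalClosure := fun n =>
    Submodule.le_topologicalClosure _ (Submodule.subset_span ⟨φ n, rfl⟩)
  obtain ⟨l, hl⟩ := exists_weakTendsto_of_cauchySeq_inner (fun n => hu (φ n))
    (cauchySeq_inner_of_cauchySeq_inner_range (fun n => hu (φ n)) hwu hcauchy)
  exact ⟨l, φ, hφ, hl⟩

end WeakCompactness

section Maximum

open Metric

variable {H : Type*} [NormedAddCommGroup H] [InnerProductSpace ℝ H] [CompleteSpace H]
  {F : H → ℝ}

theorem bddAbove_image_closedBall_of_weakTendsto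
    (hF : ∀ u l, (∀ n, ‖u n‖ ≤ 1) → WeakTendsto u l → Tendsto (F ∘ u) atTop (𝓝 (F l))) :
    BddAbove (F '' closedBall (0 : H) 1) := by
  by_contra hunb
  choose u hu hlarge using fun n : ℕ => Set.exists_mem_image.1 (not_bddAbove_iff.1 hunb n)
  have hu' : ∀ n, ‖u n‖ ≤ 1 := fun n => mem_closedBall_zero_iff.1 (hu n)
  obtain ⟨l, φ, hφ, hl⟩ := exists_weakTendsto_subseq hu'
  have hinfty : Tendsto (F ∘ u ∘ φ) atTop atTop :=
    tendsto_atTop_mono (fun n => (hlarge (φ n)).le)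
      (tendsto_natCast_atTop_atTop.comp hφ.tendsto_atTop)
  exact not_tendsto_atTop_of_tendsto_nhds (hF _ l (fun n => hu' (φ n)) hl) hinfty

theorem exists_isMaxOn_closedBall_of_weakTendsto
    (hF : ∀ u l, (∀ n, ‖u n‖ ≤ 1) → WeakTendsto u l → Tendsto (F ∘ u) atTop (𝓝 (F l))) :
    ∃ u₀ ∈ closedBall (0 : H) 1, IsMaxOn F (closedBall 0 1) u₀ := by
  have hbdd := bddAbove_image_closedBall_of_weakTendsto hF
  obtain ⟨x, -, hx, hxF⟩ := exists_seq_tendsto_sSup ((nonempty_closedBall.2 zero_le_one).image F)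
    hbdd
  choose u hu hux using hxF
  have hu' : ∀ n, ‖u n‖ ≤ 1 := fun n => mem_closedBall_zero_iff.1 (hu n)
  obtain ⟨l, φ, hφ, hl⟩ := exists_weakTendsto_subseq hu'
  have hFl : F l = sSup (F '' closedBall 0 1) := by
    refine tendsto_nhds_unique (hF _ l (fun n => hu' (φ n)) hl) ?_
    simpa [Function.comp_def, hux] using hx.comp hφ.tendsto_atTop
  refine ⟨l, mem_closedBall_zero_iff.2 (hl.norm_le fun n => hu' (φ n)), fun v hv => ?_⟩
  rw [Set.mem_ofPred_eq, hFl]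
  exact le_csSup hbdd ⟨v, hv, rfl⟩

end Maximum

section Homogeneous

open Metric

variable {E : Type*} [NormedAddCommGroup E] [NormedSpace ℝ E] {F : E → ℝ} {u₀ : E}

theorem div_norm_sq_le_of_isMaxOn_closedBall
    (hhom : ∀ t : ℝ, 0 < t → ∀ u, F (t • u) = t ^ 2 * F u)
    (hmax : IsMaxOn F (closedBall 0 1) u₀) {u : E} (hu : u ≠ 0) : F u / ‖u‖ ^ 2 ≤ F u₀ := by
  have hpos : 0 < ‖u‖ := norm_pos_iff.2 hu
  calc F u / ‖u‖ ^ 2 = F (‖u‖⁻¹ • u) := by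
        rw [hhom _ (inv_pos.2 hpos)]
        field_simp
    _ ≤ F u₀ := hmax (mem_closedBall_zero_iff.2 (norm_smul_inv_norm hu).le)

theorem norm_eq_one_of_isMaxOn_closedBall
    (hhom : ∀ t : ℝ, 0 < t → ∀ u, F (t • u) = t ^ 2 * F u)
    (hu₀ : u₀ ∈ closedBall 0 1) (hmax : IsMaxOn F (closedBall 0 1) u₀) (hpos : 0 < F u₀) :
    ‖u₀‖ = 1 := by
  have hF0 : F 0 = 0 := by
    have := hhom 2 two_pos 0
    rw [smul_zero] at this
    linarith
  have hne : u₀ ≠ 0 := by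
    rintro rfl
    exact hpos.ne' hF0
  have hquot := div_norm_sq_le_of_isMaxOn_closedBall hhom hmax hne
  rw [div_le_iff₀ (by positivity)] at hquot
  have hsq : 1 ≤ ‖u₀‖ ^ 2 := le_of_mul_le_mul_left (by simpa using hquot) hpos
  nlinarith [norm_nonneg u₀, mem_closedBall_zero_iff.1 hu₀]

end Homogeneous

theorem stmt_13_general {H : Type*} [NormedAddCommGroup H] [InnerProductSpace ℝ H] [CompleteSpace H]
    (S : H →L[ℝ] H)
    (hcpt : IsCompactOperator S)
    (β : H → H)
    (hhom : ∀ (t : ℝ), 0 < t → ∀ u : H, β (t • u) = t • β u)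
    (hws : ∀ (w : ℕ → H) (l : H),
      (∀ v : H, Tendsto (fun n => ⟪w n, v⟫) atTop (𝓝 ⟪l, v⟫)) →
      Tendsto (fun n => β (w n)) atTop (𝓝 (β l)))
    (hφ : ∃ φ : H, 0 < ⟪S φ, φ⟫ - ⟪β φ, φ⟫) :
    ∃ u₀ : H, ‖u₀‖ = 1 ∧ 0 < ⟪S u₀, u₀⟫ - ⟪β u₀, u₀⟫ ∧
      (∀ u : H, ‖u‖ = 1 → ⟪S u, u⟫ - ⟪β u, u⟫ ≤ ⟪S u₀, u₀⟫ - ⟪β u₀, u₀⟫) ∧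
      (∀ u : H, u ≠ 0 →
        (⟪S u, u⟫ - ⟪β u, u⟫) / ‖u‖ ^ 2 ≤ ⟪S u₀, u₀⟫ - ⟪β u₀, u₀⟫) := by
  set F : H → ℝ := fun u => ⟪S u, u⟫ - ⟪β u, u⟫
  have hF_hom : ∀ t : ℝ, 0 < t → ∀ u, F (t • u) = t ^ 2 * F u := by
    intro t ht u
    simp only [F, map_smul, hhom t ht, real_inner_smul_left, real_inner_smul_right]
    ring
  have hF_cont : ∀ u l, (∀ n, ‖u n‖ ≤ 1) → WeakTendsto u l → Tendsto (F ∘ u) atTop (𝓝 (F l)) :=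
    fun u l hu hl => (hl.tendsto_inner_of_tendsto hu (hcpt.tendsto_of_weakTendsto hu hl)).sub
      (hl.tendsto_inner_of_tendsto hu (hws u l hl))
  obtain ⟨u₀, hu₀, hmax⟩ := exists_isMaxOn_closedBall_of_weakTendsto hF_cont
  have hquot := fun u (hu : u ≠ 0) => div_norm_sq_le_of_isMaxOn_closedBall hF_hom hmax hu
  obtain ⟨φ, hφ⟩ := hφ
  have hφ0 : φ ≠ 0 := by
    rintro rfl
    simp at hφ
  have hpos : 0 < F u₀ := (div_pos hφ (by positivity)).trans_le (hquot φ hφ0)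
  exact ⟨u₀, norm_eq_one_of_isMaxOn_closedBall hF_hom hu₀ hmax hpos, hpos,
    fun u hu => hmax (mem_closedBall_zero_iff.2 hu.le), hquot⟩

/-- If `S` is linear bounded symmetric compact, `β` positively homogeneous with
`(β u, u) ≥ 0` and weak-to-strong sequentially continuous, and
`(S φ, φ) − (β φ, φ) > 0` for some `φ`, then `M = max_{‖u‖=1} [(S u, u) − (β u, u)]`
exists, is positive, and dominates the quotient `[(S u, u) − (β u, u)]/‖u‖²` for all
`u ≠ 0`. -/
theorem stmt_13 {H : Type*} [NormedAddCommGroup H] [InnerProductSpace ℝ H] [CompleteSpace H]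
    (S : H →L[ℝ] H)
    (hsym : ∀ u v : H, ⟪S u, v⟫ = ⟪u, S v⟫)
    (hcpt : IsCompactOperator S)
    (β : H → H)
    (hhom : ∀ (t : ℝ), 0 < t → ∀ u : H, β (t • u) = t • β u)
    (hβnn : ∀ u : H, 0 ≤ ⟪β u, u⟫)
    (hws : ∀ (w : ℕ → H) (l : H),
      (∀ v : H, Tendsto (fun n => ⟪w n, v⟫) atTop (𝓝 ⟪l, v⟫)) →
      Tendsto (fun n => β (w n)) atTop (𝓝 (β l)))
    (hφ : ∃ φ : H, 0 < ⟪S φ, φ⟫ - ⟪β φ, φ⟫) :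
    ∃ u₀ : H, ‖u₀‖ = 1 ∧ 0 < ⟪S u₀, u₀⟫ - ⟪β u₀, u₀⟫ ∧
      (∀ u : H, ‖u‖ = 1 → ⟪S u, u⟫ - ⟪β u, u⟫ ≤ ⟪S u₀, u₀⟫ - ⟪β u₀, u₀⟫) ∧
      (∀ u : H, u ≠ 0 →
        (⟪S u, u⟫ - ⟪β u, u⟫) / ‖u‖ ^ 2 ≤ ⟪S u₀, u₀⟫ - ⟪β u₀, u₀⟫) :=
  stmt_13_general S hcpt β hhom hws hφ
end

section
/- Let Ω ⊂ ℝ^N be a bounded Lipschitz domain, s ∈ L^∞(Ω) nonnegative, and define β⁻ : H¹_D → H¹_D by (β⁻(u), φ) = −∫_Ω s u⁻ φ dΩ. Then for all u₀, h ∈ H¹_D: lim_{t→0} (1/t)(β⁻(u₀ + th) − β⁻(u₀), u₀) = (β⁻(u₀), h). -/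
open MeasureTheory Filter Topology
open scoped RealInnerProductSpace ENNReal

/-!
Pointwise, if `a ≠ 0` and `t` is small then `a + t b` has the sign of `a`, so
`((a + t b)⁻ - a⁻) a = t a⁻ b` exactly; for `a = 0` both sides vanish. As `u ↦ u⁻` is
1-Lipschitz, the difference quotients are dominated by `|s a b|`, integrable by Hölder, and
dominated convergence gives the limit.
-/

section NegPart

variable (A B : ℝ)

theorem eventually_negPart_add_mul_sub_mul_eq :
    ∀ᶠ t in 𝓝 (0 : ℝ), (max (-(A + t * B)) 0 - max (-A) 0) * A = t * (max (-A) 0 * B) := by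
  have hcont : Tendsto (fun t : ℝ => A + t * B) (𝓝 0) (𝓝 A) :=
    (by fun_prop : Continuous fun t : ℝ => A + t * B).tendsto' 0 A (by simp)
  rcases lt_trichotomy A 0 with hA | rfl | hA
  · filter_upwards [hcont.eventually_lt_const hA] with t ht
    rw [max_eq_left (by linarith), max_eq_left (by linarith)]
    ring
  · simp
  · filter_upwards [hcont.eventually_const_lt hA] with t ht
    rw [max_eq_right (by linarith), max_eq_right (by linarith)]
    ring

theorem tendsto_inv_mul_negPart_add_mul_sub_mul :
    Tendsto (fun t : ℝ => t⁻¹ * ((max (-(A + t * B)) 0 - max (-A) 0) * A)) (𝓝[≠] 0)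
      (𝓝 (max (-A) 0 * B)) := by
  refine tendsto_const_nhds.congr' ?_
  filter_upwards [nhdsWithin_le_nhds (eventually_negPart_add_mul_sub_mul_eq A B),
    self_mem_nhdsWithin] with t ht ht0
  rw [ht, inv_mul_cancel_left₀ ht0]

theorem abs_negPart_add_mul_sub_mul_le (t : ℝ) :
    |(max (-(A + t * B)) 0 - max (-A) 0) * A| ≤ |t| * |A * B| := by
  calc |(max (-(A + t * B)) 0 - max (-A) 0) * A|
      = |max (-(A + t * B)) 0 - max (-A) 0| * |A| := abs_mul _ _
    _ ≤ |-(A + t * B) - -A| * |A| :=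
      mul_le_mul_of_nonneg_right (abs_max_sub_max_le_abs _ _ 0) (abs_nonneg A)
    _ = |t| * |A * B| := by
      rw [show -(A + t * B) - -A = -(t * B) by ring, abs_neg, abs_mul, abs_mul]
      ring

end NegPart

section Integral

variable {α : Type*} [MeasurableSpace α] {μ : Measure α}

theorem tendsto_inv_mul_integral_negPart_add_mul_sub_mul {s a b : α → ℝ}
    (hs : AEStronglyMeasurable s μ) (ha : AEStronglyMeasurable a μ) (hb : AEStronglyMeasurable b μ)
    (hsab : Integrable (fun x => s x * (a x * b x)) μ) :
    Tendsto (fun t : ℝ =>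
        t⁻¹ * ∫ x, s x * ((max (-(a x + t * b x)) 0 - max (-(a x)) 0) * a x) ∂μ)
      (𝓝[≠] 0) (𝓝 (∫ x, s x * (max (-(a x)) 0 * b x) ∂μ)) := by
  simp_rw [← integral_const_mul, mul_left_comm _ (s _)]
  refine tendsto_integral_filter_of_dominated_convergence (fun x => ‖s x * (a x * b x)‖)
    (.of_forall fun t => by fun_prop) ?_ hsab.norm
    (.of_forall fun x => (tendsto_inv_mul_negPart_add_mul_sub_mul (a x) (b x)).const_mul (s x))
  filter_upwards [self_mem_nhdsWithin] with t (ht : t ≠ 0)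
  refine .of_forall fun x => ?_
  calc ‖s x * (t⁻¹ * ((max (-(a x + t * b x)) 0 - max (-(a x)) 0) * a x))‖
      = |s x| * (|t|⁻¹ * |(max (-(a x + t * b x)) 0 - max (-(a x)) 0) * a x|) := by
        rw [Real.norm_eq_abs, abs_mul, abs_mul, abs_inv]
    _ ≤ |s x| * (|t|⁻¹ * (|t| * |a x * b x|)) := by
      gcongr
      exact abs_negPart_add_mul_sub_mul_le (a x) (b x) t
    _ = ‖s x * (a x * b x)‖ := by
      rw [inv_mul_cancel_left₀ (abs_ne_zero.mpr ht), Real.norm_eq_abs, abs_mul (s x)]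

theorem MeasureTheory.Lp.integrable_mul_negPart_mul (s : Lp ℝ ∞ μ) (f g : Lp ℝ 2 μ) :
    Integrable (fun x => s x * max (-f x) 0 * g x) μ :=
  memLp_one_iff_integrable.mp <|
    (Lp.memLp g).mul' <| (Lp.memLp f).neg_part.mul' (r := 2) (Lp.memLp s)

theorem MeasureTheory.Lp.integrable_mul_mul (s : Lp ℝ ∞ μ) (f g : Lp ℝ 2 μ) :
    Integrable (fun x => s x * (f x * g x)) μ :=
  memLp_one_iff_integrable.mp <| ((Lp.memLp g).mul' (r := 1) (Lp.memLp f)).mul' (Lp.memLp s)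

end Integral


theorem stmt_17_general {N : ℕ}
    (μ : Measure (EuclideanSpace ℝ (Fin N)))
    {H : Type*} [NormedAddCommGroup H] [InnerProductSpace ℝ H]
    (s : Lp ℝ ∞ μ)
    (V : H →L[ℝ] Lp ℝ 2 μ)
    (βm : H → H)
    (hβm : ∀ u φ : H, ⟪βm u, φ⟫ =
      -∫ x, (s : EuclideanSpace ℝ (Fin N) → ℝ) x
          * max (-(V u : EuclideanSpace ℝ (Fin N) → ℝ) x) 0
          * (V φ : EuclideanSpace ℝ (Fin N) → ℝ) x ∂μ) :
    ∀ u₀ h : H,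
      Tendsto (fun t : ℝ => t⁻¹ * ⟪βm (u₀ + t • h) - βm u₀, u₀⟫) (𝓝[≠] 0)
        (𝓝 ⟪βm u₀, h⟫) := by
  intro u₀ h
  set a := (V u₀ : EuclideanSpace ℝ (Fin N) → ℝ)
  set b := (V h : EuclideanSpace ℝ (Fin N) → ℝ)
  have hinner_sub : ∀ t : ℝ, ⟪βm (u₀ + t • h) - βm u₀, u₀⟫ =
      -∫ x, s x * ((max (-(a x + t * b x)) 0 - max (-(a x)) 0) * a x) ∂μ := by
    intro t
    have hV : ⇑(V (u₀ + t • h)) =ᵐ[μ] fun x => a x + t * b x := by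
      rw [map_add, map_smul]
      filter_upwards [Lp.coeFn_add (V u₀) (t • V h), Lp.coeFn_smul t (V h)] with x hadd hsmul
      rw [hadd, Pi.add_apply, hsmul, Pi.smul_apply, smul_eq_mul]
    rw [inner_sub_left, hβm, hβm, neg_sub_neg, ← integral_sub
      (Lp.integrable_mul_negPart_mul s (V u₀) (V u₀))
      (Lp.integrable_mul_negPart_mul s (V (u₀ + t • h)) (V u₀)), ← integral_neg]
    refine integral_congr_ae (hV.mono fun x hx => ?_)
    simp only [hx]
    ring
  have hinner : ⟪βm u₀, h⟫ = -∫ x, s x * (max (-(a x)) 0 * b x) ∂μ := by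
    simp only [hβm, mul_assoc]
    rfl
  simp_rw [hinner_sub, hinner, mul_neg]
  exact (tendsto_inv_mul_integral_negPart_add_mul_sub_mul (Lp.aestronglyMeasurable s)
    (Lp.aestronglyMeasurable _) (Lp.aestronglyMeasurable _) (Lp.integrable_mul_mul s _ _)).neg

/-- Directional limit condition for `β⁻` defined by `(β⁻ u, φ) = −∫ s u⁻ φ`:
for all `u₀, h ∈ H¹_D`,
`lim_{t→0} (1/t)(β⁻(u₀ + t h) − β⁻(u₀), u₀) = (β⁻(u₀), h)`. -/
theorem stmt_17 {N : ℕ} (Ω : Set (EuclideanSpace ℝ (Fin N)))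
    (hΩb : Bornology.IsBounded Ω) (hΩm : MeasurableSet Ω)
    (μ : Measure (EuclideanSpace ℝ (Fin N))) (hμ : μ = volume.restrict Ω)
    {H : Type*} [NormedAddCommGroup H] [InnerProductSpace ℝ H] [CompleteSpace H]
    (s : Lp ℝ ∞ μ) (hs : 0 ≤ s)
    (V : H →L[ℝ] Lp ℝ 2 μ)
    (βm : H → H)
    (hβm : ∀ u φ : H, ⟪βm u, φ⟫ =
      -∫ x, (s : EuclideanSpace ℝ (Fin N) → ℝ) x
          * max (-(V u : EuclideanSpace ℝ (Fin N) → ℝ) x) 0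
          * (V φ : EuclideanSpace ℝ (Fin N) → ℝ) x ∂μ) :
    ∀ u₀ h : H,
      Tendsto (fun t : ℝ => t⁻¹ * ⟪βm (u₀ + t • h) - βm u₀, u₀⟫) (𝓝[≠] 0)
        (𝓝 ⟪βm u₀, h⟫) :=
  stmt_17_general μ s V βm hβm
end
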